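/- arXiv:1209.5089 — 7 statements merged into one kernel-verified Lean document; each statement's English description precedes it below -/
import Mathlib

section
/- Let Γ be a d-chorded simplicial complex and let W be any subset of the vertex set of Γ. Then the pure d-skeleton (Γ_W)^{[d]} of the induced subcomplex Γ_W is d-chorded. -/
open Finset

namespace ChordedPaper

variable {V : Type*} [DecidableEq V] [Fintype V]

/-- A simplicial complex: a set of finsets (faces) closed under taking subsets.
(The vertices of the complex are the vertices of its faces, so all singletons of
vertices are automatically faces.) -/
def IsComplex (K : Set (Finset V)) : Prop :=
  ∀ F ∈ K, ∀ G ⊆ F, G ∈ K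

/-- The vertex set `V(K)` of a complex. -/
def verts (K : Set (Finset V)) : Set V :=
  {v | ∃ F ∈ K, v ∈ F}

/-- The `d`-dimensional faces (cardinality `d+1`) of `K`. -/
def dfaces (K : Set (Finset V)) (d : ℕ) : Set (Finset V) :=
  {F | F ∈ K ∧ F.card = d + 1}

/-- `K` is pure `d`-dimensional: every face is contained in a `d`-face. -/
def IsPureD (K : Set (Finset V)) (d : ℕ) : Prop :=
  ∀ F ∈ K, ∃ G ∈ dfaces K d, F ⊆ G

/-- The complex generated by a set of facets. -/
def gen (S : Set (Finset V)) : Set (Finset V) :=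
  {G | ∃ F ∈ S, G ⊆ F}

/-- The pure `d`-skeleton `K^{[d]}`: the complex whose facets are the `d`-faces of `K`. -/
def skel (K : Set (Finset V)) (d : ℕ) : Set (Finset V) :=
  gen (dfaces K d)

/-- The induced subcomplex `K_W` on a set `W` of vertices. -/
def induced (K : Set (Finset V)) (W : Set V) : Set (Finset V) :=
  {F | F ∈ K ∧ ↑F ⊆ W}

/-- Two `d`-faces of `S` are adjacent in a `d`-path if they share `d` vertices. -/
def adj (S : Set (Finset V)) (d : ℕ) (F G : Finset V) : Prop :=
  F ∈ S ∧ G ∈ S ∧ (F ∩ G).card = d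

/-- `d`-path-connectedness: any two `d`-faces are joined by a `d`-path. -/
def PathConn (K : Set (Finset V)) (d : ℕ) : Prop :=
  ∀ F ∈ dfaces K d, ∀ G ∈ dfaces K d, Relation.ReflTransGen (adj (dfaces K d) d) F G

/-- A `d`-dimensional cycle: a pure `d`-dimensional, `d`-path-connected complex in which
every `(d-1)`-face lies in an even number of `d`-faces. -/
def IsCycle (Ω : Set (Finset V)) (d : ℕ) : Prop :=
  IsComplex Ω ∧ IsPureD Ω d ∧ (dfaces Ω d).Nonempty ∧ PathConn Ω d ∧
    ∀ f ∈ Ω, Finset.card f = d → Even {F | F ∈ dfaces Ω d ∧ f ⊆ F}.ncard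

/-- A `d`-dimensional cycle in the complex `Γ`. -/
def CycleIn (Γ Ω : Set (Finset V)) (d : ℕ) : Prop :=
  Ω ⊆ Γ ∧ IsCycle Ω d

/-- Face-minimality: no strict subset of the `d`-faces of `Ω` forms a `d`-dimensional cycle. -/
def FaceMinimal (Ω : Set (Finset V)) (d : ℕ) : Prop :=
  ∀ S : Set (Finset V), S ⊂ dfaces Ω d → ¬ IsCycle (gen S) d

/-- Vertex-minimality of a cycle `Ω` in `Γ`: no `d`-dimensional cycle in `Γ` lies on a
strict subset of the vertices of `Ω`. -/
def VertexMinimal (Γ Ω : Set (Finset V)) (d : ℕ) : Prop :=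
  ∀ Ω', CycleIn Γ Ω' d → ¬ (verts Ω' ⊂ verts Ω)

/-- `d`-completeness: every `(d+1)`-subset of the vertex set is a face. -/
def DComplete (K : Set (Finset V)) (d : ℕ) : Prop :=
  ∀ S : Finset V, ↑S ⊆ verts K → S.card = d + 1 → S ∈ K

/-- A chord set `C` of the `d`-dimensional cycle `Ω` in `Γ`. -/
def ChordSet (Γ Ω : Set (Finset V)) (d : ℕ) (C : Set (Finset V)) : Prop :=
  C ⊆ dfaces Γ d ∧ (∀ F ∈ C, F ∉ Ω) ∧ (∀ F ∈ C, ↑F ⊆ verts Ω) ∧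
    ∃ (n : ℕ) (Ωi : Fin n → Set (Finset V)), 2 ≤ n ∧ (∀ i, IsCycle (Ωi i) d) ∧
      (⋃ i, dfaces (Ωi i) d) = dfaces Ω d ∪ C ∧
      (∀ F ∈ C, Even {i | F ∈ dfaces (Ωi i) d}.ncard) ∧
      (∀ F ∈ dfaces Ω d, Odd {i | F ∈ dfaces (Ωi i) d}.ncard) ∧
      (∀ i, (verts (Ωi i)).ncard < (verts Ω).ncard)

/-- `Γ` is `d`-chorded: every face-minimal `d`-dimensional cycle in `Γ` that is not
`d`-complete has a chord set in `Γ`. -/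
def DChorded (Γ : Set (Finset V)) (d : ℕ) : Prop :=
  ∀ Ω, CycleIn Γ Ω d → FaceMinimal Ω d → ¬ DComplete Ω d → ∃ C, ChordSet Γ Ω d C

/-- `Γ` is `d`-cycle-complete: every vertex-minimal `d`-dimensional cycle in `Γ` is
`d`-complete. -/
def DCycleComplete (Γ : Set (Finset V)) (d : ℕ) : Prop :=
  ∀ Ω, CycleIn Γ Ω d → VertexMinimal Γ Ω d → DComplete Ω d

/-- The `d`-closure `Δ_d(K)` of the complex `K`, relative to the vertex set `W`:
it contains the faces of `K`, all subsets of `W` of size at most `d`, and every subset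
`S` of `W` with `|S| > d+1` all of whose `(d+1)`-subsets are faces of `K`. -/
def closure (W : Set V) (K : Set (Finset V)) (d : ℕ) : Set (Finset V) :=
  K ∪ {S | ↑S ⊆ W ∧ S.card ≤ d} ∪
    {S | ↑S ⊆ W ∧ d + 1 < S.card ∧ ∀ T ⊆ S, T.card = d + 1 → T ∈ K}

/-- A `d`-dimensional tree: a pure `d`-dimensional complex with no `d`-dimensional cycles. -/
def IsTree (K : Set (Finset V)) (d : ℕ) : Prop :=
  IsComplex K ∧ IsPureD K d ∧ ∀ Ω, ¬ CycleIn K Ω d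

/-- The unsigned boundary map on chains (appropriate over rings of characteristic 2):
a face is sent to the sum of the faces obtained by deleting one vertex. -/
noncomputable def ubd {R : Type*} [AddCommMonoid R] (c : Finset V →₀ R) : Finset V →₀ R :=
  c.sum fun F a => F.sum fun v => Finsupp.single (F.erase v) a

/-- The signed (oriented) boundary map on chains, the vertices of each face being listed
in increasing order. -/
noncomputable def sbd [LinearOrder V] {R : Type*} [Ring R] (c : Finset V →₀ R) : Finset V →₀ R :=
  c.sum fun F a =>
    F.sum fun v => Finsupp.single (F.erase v) ((-1 : R) ^ (F.filter fun w => w < v).card * a)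

/-- `c` is an `i`-chain on the complex `K`: it is supported on `i`-faces of `K`. -/
def ChainOn {R : Type*} [Zero R] (K : Set (Finset V)) (i : ℕ) (c : Finset V →₀ R) : Prop :=
  ∀ F ∈ c.support, F ∈ K ∧ F.card = i + 1

/-- Vanishing of the reduced simplicial homology `H̃_i(K; R)` for the unsigned boundary
map (this is reduced simplicial homology when `R` has characteristic 2): every `i`-chain
with vanishing boundary (for `i = 0`, the boundary at the empty face is the augmentation ε)
is the boundary of an `(i+1)`-chain. -/
def RedHomZeroU (K : Set (Finset V)) (R : Type*) [AddCommMonoid R] (i : ℕ) : Prop :=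
  ∀ c : Finset V →₀ R, ChainOn K i c → ubd c = 0 →
    ∃ b : Finset V →₀ R, ChainOn K (i + 1) b ∧ ubd b = c

/-- Vanishing of the reduced simplicial homology `H̃_i(K; R)` (oriented chains). -/
def RedHomZeroS [LinearOrder V] (K : Set (Finset V)) (R : Type*) [Ring R] (i : ℕ) : Prop :=
  ∀ c : Finset V →₀ R, ChainOn K i c → sbd c = 0 →
    ∃ b : Finset V →₀ R, ChainOn K (i + 1) b ∧ sbd b = c

/-- Orientability of a `d`-dimensional cycle: there is a choice of signs on its `d`-faces
making the resulting ℤ-chain have zero (oriented) boundary. -/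
def Orientable [LinearOrder V] (Ω : Set (Finset V)) (d : ℕ) : Prop :=
  ∃ c : Finset V →₀ ℤ, ↑c.support = dfaces Ω d ∧
    (∀ F ∈ c.support, c F = 1 ∨ c F = -1) ∧ sbd c = 0

/-- Orientable-vertex-minimality of a cycle `Ω` in `Γ`: no orientable `d`-dimensional
cycle in `Γ` lies on a strict subset of the vertices of `Ω`. -/
def OrientVertexMinimal [LinearOrder V] (Γ Ω : Set (Finset V)) (d : ℕ) : Prop :=
  ∀ Ω', CycleIn Γ Ω' d → Orientable Ω' d → ¬ (verts Ω' ⊂ verts Ω)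

/-- `Γ` is orientably-`d`-cycle-complete: every orientably-vertex-minimal (orientable)
`d`-dimensional cycle in `Γ` is `d`-complete. -/
def OrientDCycleComplete [LinearOrder V] (Γ : Set (Finset V)) (d : ℕ) : Prop :=
  ∀ Ω, CycleIn Γ Ω d → Orientable Ω d → OrientVertexMinimal Γ Ω d → DComplete Ω d

/-- A minimal non-face of `K`: a subset of the vertex set that is not a face, all of whose
proper subsets are faces. -/
def MinNonFace (K : Set (Finset V)) (S : Finset V) : Prop :=
  ↑S ⊆ verts K ∧ S ∉ K ∧ ∀ T ⊂ S, T ∈ K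

/-- Lemma 3.2: the pure `d`-skeleton of any induced subcomplex of a
`d`-chorded simplicial complex is `d`-chorded. -/
theorem skel_induced_dChorded {V : Type*} [DecidableEq V] [Fintype V]
    (Γ : Set (Finset V)) (d : ℕ)
    (hcomplex : IsComplex Γ) (hpure : IsPureD Γ d) (hchorded : DChorded Γ d)
    (W : Set V) :
    DChorded (skel (induced Γ W) d) d := by
  intro Ω hΩ hmin hncomp
  have hsub : skel (induced Γ W) d ⊆ Γ := by
    rintro G ⟨F, ⟨⟨hFΓ, hFW⟩, hcard⟩, hGF⟩
    exact hcomplex F hFΓ G hGF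
  have hΩΓ : CycleIn Γ Ω d := ⟨hΩ.1.trans hsub, hΩ.2⟩
  obtain ⟨C, hC1, hC2, hC3, hC4⟩ := hchorded Ω hΩΓ hmin hncomp
  refine ⟨C, ?_, hC2, hC3, hC4⟩
  intro F hF
  obtain ⟨hFΓ, hFcard⟩ := hC1 hF
  have hvW : verts Ω ⊆ W := by
    rintro v ⟨G, hGΩ, hvG⟩
    obtain ⟨F', ⟨⟨_, hF'W⟩, _⟩, hGF'⟩ := hΩ.1 hGΩ
    exact hF'W (hGF' hvG)
  have hFind : F ∈ induced Γ W := ⟨hFΓ, (hC3 F hF).trans hvW⟩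
  exact ⟨⟨F, ⟨hFind, hFcard⟩, subset_rfl⟩, hFcard⟩

end ChordedPaper
end

section
/- Any d-chorded simplicial complex is d-cycle-complete; that is, if Γ is a pure d-dimensional simplicial complex in which every face-minimal d-dimensional cycle that is not d-complete has a chord set, then every vertex-minimal d-dimensional cycle in Γ is d-complete. -/
open Finset

namespace ChordedPaper

variable {V : Type*} [DecidableEq V] [Fintype V]

/-- Proposition 4.9.1: any `d`-chorded simplicial complex is
`d`-cycle-complete. -/
theorem dChorded_dCycleComplete {V : Type*} [DecidableEq V] [Fintype V]
    (Γ : Set (Finset V)) (d : ℕ)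
    (hcomplex : IsComplex Γ) (hpure : IsPureD Γ d) (hchorded : DChorded Γ d) :
    DCycleComplete Γ d := by
  -- auxiliary: find a ⊆-minimal S with `IsCycle (gen S) d`
  have key : ∀ n (S : Set (Finset V)), S.ncard ≤ n → IsCycle (gen S) d →
      ∃ S', S' ⊆ S ∧ IsCycle (gen S') d ∧ ∀ T ⊂ S', ¬ IsCycle (gen T) d := by
    intro n
    induction n with
    | zero =>
      intro S hS hcyc
      refine ⟨S, subset_rfl, hcyc, fun T hT hTc => ?_⟩
      have : T.ncard < S.ncard := Set.ncard_lt_ncard hT (Set.toFinite S)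
      omega
    | succ n ih =>
      intro S hS hcyc
      by_cases h : ∃ T ⊂ S, IsCycle (gen T) d
      · obtain ⟨T, hTS, hTc⟩ := h
        have hlt : T.ncard < S.ncard := Set.ncard_lt_ncard hTS (Set.toFinite S)
        obtain ⟨S', h1, h2, h3⟩ := ih T (by omega) hTc
        exact ⟨S', h1.trans hTS.subset, h2, h3⟩
      · push_neg at h
        exact ⟨S, subset_rfl, hcyc, h⟩
  intro Ω hΩ hmin
  obtain ⟨hΩΓ, hcyc⟩ := hΩ
  obtain ⟨hΩcx, hΩpure, hΩne, hΩconn, hΩeven⟩ := hcyc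
  have hgen : gen (dfaces Ω d) = Ω := by
    ext G
    constructor
    · rintro ⟨F, hF, hGF⟩; exact hΩcx F hF.1 G hGF
    · intro hG; obtain ⟨F, hF, hGF⟩ := hΩpure G hG; exact ⟨F, hF, hGF⟩
  obtain ⟨S₀, hS₀sub, hS₀cyc, hS₀min⟩ := key (dfaces Ω d).ncard (dfaces Ω d) le_rfl
    (by rw [hgen]; exact ⟨hΩcx, hΩpure, hΩne, hΩconn, hΩeven⟩)
  -- gen S₀ ⊆ Ω
  have hsubΩ : gen S₀ ⊆ Ω := by
    rintro G ⟨F, hF, hGF⟩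
    exact hΩcx F (hS₀sub hF).1 G hGF
  have hsubΓ : gen S₀ ⊆ Γ := hsubΩ.trans hΩΓ
  have hCI : CycleIn Γ (gen S₀) d := ⟨hsubΓ, hS₀cyc⟩
  have hdf : dfaces (gen S₀) d = S₀ := by
    ext F
    constructor
    · rintro ⟨⟨G, hG, hFG⟩, hcard⟩
      have hGcard : G.card = d + 1 := (hS₀sub hG).2
      have : F = G := Finset.eq_of_subset_of_card_le hFG (by omega)
      rwa [this]
    · intro hF
      exact ⟨⟨F, hF, subset_rfl⟩, (hS₀sub hF).2⟩
  -- verts (gen S₀) = verts Ω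
  have hvsub : verts (gen S₀) ⊆ verts Ω := by
    rintro v ⟨F, hF, hv⟩
    exact ⟨F, hsubΩ hF, hv⟩
  have hvv : verts (gen S₀) = verts Ω := by
    rcases hvsub.lt_or_eq with h | h
    · exact absurd h (hmin _ hCI)
    · exact h
  -- gen S₀ is face-minimal
  have hFM : FaceMinimal (gen S₀) d := by
    intro T hT
    rw [hdf] at hT
    exact hS₀min T hT
  -- gen S₀ is d-complete
  have hDC : DComplete (gen S₀) d := by
    by_contra hnc
    obtain ⟨C, hCΓ, hCnotin, hCverts, n, Ωi, hn, hΩicyc, hunion, hCeven, hodd, hfewer⟩ :=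
      hchorded (gen S₀) hCI hFM hnc
    set i0 : Fin n := ⟨0, by omega⟩
    obtain ⟨hicx, hipure, hine, hiconn, hieven⟩ := hΩicyc i0
    have hdfi : dfaces (Ωi i0) d ⊆ dfaces (gen S₀) d ∪ C := by
      rw [← hunion]
      exact Set.subset_iUnion (fun i => dfaces (Ωi i) d) i0
    have hiΓ : Ωi i0 ⊆ Γ := by
      intro F hF
      obtain ⟨G, hG, hFG⟩ := hipure F hF
      rcases hdfi hG with h | h
      · exact hcomplex G (hsubΓ (hdf ▸ h : G ∈ dfaces (gen S₀) d).1) F hFG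
      · exact hcomplex G (hCΓ h).1 F hFG
    have hivsub : verts (Ωi i0) ⊆ verts (gen S₀) := by
      rintro v ⟨F, hF, hv⟩
      obtain ⟨G, hG, hFG⟩ := hipure F hF
      rcases hdfi hG with h | h
      · exact ⟨G, h.1, hFG hv⟩
      · exact hCverts G h (hFG hv)
    have hss : verts (Ωi i0) ⊂ verts Ω := by
      refine (Set.ssubset_iff_subset_ne).2 ⟨hivsub.trans (hvv ▸ Set.Subset.rfl), ?_⟩
      intro h
      have := hfewer i0
      rw [h, ← hvv] at this
      omega
    exact hmin (Ωi i0) ⟨hiΓ, hΩicyc i0⟩ hss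
  -- conclude
  intro S hS hcard
  have : S ∈ gen S₀ := hDC S (by rw [hvv]; exact hS) hcard
  exact hsubΩ this

end ChordedPaper
end

section
/- Any d-cycle-complete simplicial complex is orientably-d-cycle-complete; that is, if Γ is a pure d-dimensional simplicial complex in which every vertex-minimal d-dimensional cycle is d-complete, then every orientably-vertex-minimal d-dimensional cycle in Γ is d-complete. -/
open Finset

/-! A `d`-cycle-complete complex contains, on the vertex set of any of its `d`-cycles, a
vertex-minimal `d`-cycle. That cycle is `d`-complete and has at least `d + 2` vertices, so it
contains the boundary of a `(d+1)`-simplex, which is an orientable `d`-cycle. Hence every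
orientably-vertex-minimal `d`-cycle is vertex-minimal, and `d`-cycle-completeness applies. -/

namespace ChordedPaper

variable {V : Type*}

def simplexBoundary (S : Finset V) : Set (Finset V) :=
  {T | T ⊂ S}

lemma isComplex_simplexBoundary (S : Finset V) : IsComplex (simplexBoundary S) :=
  fun _ hF _ hGF => lt_of_le_of_lt hGF hF

lemma verts_simplexBoundary_subset (S : Finset V) : verts (simplexBoundary S) ⊆ ↑S :=
  fun _ ⟨_, (hT : _ ⊂ S), hvT⟩ => hT.subset hvT

variable [DecidableEq V]

lemma dfaces_simplexBoundary {S : Finset V} {d : ℕ} (hS : S.card = d + 2) :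
    dfaces (simplexBoundary S) d = ↑(S.image S.erase) := by
  ext T
  simp only [dfaces, simplexBoundary, Set.mem_ofPred_eq, coe_image, Set.mem_image, mem_coe]
  constructor
  · rintro ⟨hTS, hT⟩
    obtain ⟨v, hv, hTv⟩ := ssubset_iff_exists_subset_erase.1 hTS
    exact ⟨v, hv, (eq_of_subset_of_card_le hTv (by rw [card_erase_of_mem hv]; omega)).symm⟩
  · rintro ⟨v, hv, rfl⟩
    exact ⟨erase_ssubset hv, by rw [card_erase_of_mem hv]; omega⟩

lemma card_erase_inter_erase {S : Finset V} {v w : V} (hv : v ∈ S) (hw : w ∈ S) (hvw : v ≠ w) :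
    (S.erase v ∩ S.erase w).card = S.card - 2 := by
  have hinter : S.erase v ∩ S.erase w = (S.erase v).erase w := by
    ext x
    simp only [mem_inter, mem_erase]
    tauto
  rw [hinter, card_erase_of_mem (mem_erase.2 ⟨hvw.symm, hw⟩), card_erase_of_mem hv]
  omega

lemma isCycle_simplexBoundary {S : Finset V} {d : ℕ} (hS : S.card = d + 2) :
    IsCycle (simplexBoundary S) d := by
  have hfacets := dfaces_simplexBoundary hS
  refine ⟨isComplex_simplexBoundary S, ?pure, ?nonempty, ?connected, ?even⟩
  case pure =>
    intro T hTS
    obtain ⟨v, hv, hTv⟩ := ssubset_iff_exists_subset_erase.1 hTS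
    exact ⟨S.erase v, hfacets ▸ mem_image_of_mem _ hv, hTv⟩
  case nonempty =>
    obtain ⟨v, hv⟩ := card_pos.1 (by omega : 0 < S.card)
    exact ⟨S.erase v, hfacets ▸ mem_image_of_mem _ hv⟩
  case connected =>
    intro F hF G hG
    rw [hfacets] at hF hG
    obtain ⟨v, hv, rfl⟩ := mem_image.1 hF
    obtain ⟨w, hw, rfl⟩ := mem_image.1 hG
    obtain rfl | hvw := eq_or_ne v w
    · exact .refl
    · refine .single ⟨?_, ?_, ?_⟩
      · exact hfacets ▸ mem_image_of_mem _ hv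
      · exact hfacets ▸ mem_image_of_mem _ hw
      · rw [card_erase_inter_erase hv hw hvw]; omega
  case even =>
    intro f hf hfd
    have hcofaces : {F | F ∈ dfaces (simplexBoundary S) d ∧ f ⊆ F} =
        ↑((S \ f).image S.erase) := by
      ext F
      simp only [hfacets, Set.mem_ofPred_eq, mem_coe, mem_image, mem_sdiff]
      constructor
      · rintro ⟨⟨v, hv, rfl⟩, hfv⟩
        exact ⟨v, ⟨hv, (subset_erase.1 hfv).2⟩, rfl⟩
      · rintro ⟨v, ⟨hv, hvf⟩, rfl⟩
        exact ⟨⟨v, hv, rfl⟩, subset_erase.2 ⟨hf.subset, hvf⟩⟩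
    rw [hcofaces, Set.ncard_coe_finset,
      card_image_of_injOn ((erase_injOn S).mono (coe_subset.2 sdiff_subset)),
      card_sdiff_of_subset hf.subset, hS, hfd]
    exact ⟨1, by omega⟩

section Orientation

variable [LinearOrder V]

/-- The coefficient of `F.erase v` in the oriented boundary of `F`. -/
def incidenceSign (F : Finset V) (v : V) : ℤ :=
  (-1) ^ (F.filter fun w => w < v).card

lemma sbd_single (F : Finset V) (a : ℤ) :
    sbd (Finsupp.single F a) = ∑ v ∈ F, Finsupp.single (F.erase v) (incidenceSign F v * a) := by
  rw [sbd, Finsupp.sum_single_index (by simp)]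
  rfl

lemma sbd_finset_sum {ι : Type*} (s : Finset ι) (c : ι → Finset V →₀ ℤ) :
    sbd (∑ i ∈ s, c i) = ∑ i ∈ s, sbd (c i) := by
  unfold sbd
  rw [Finsupp.sum_finsetSum_index (by simp)]
  intro F a b
  simp only [mul_add, Finsupp.single_add, sum_add_distrib]

lemma sbd_single_apply_erase {S : Finset V} {v : V} (hv : v ∈ S) (a : ℤ) :
    sbd (Finsupp.single S a) (S.erase v) = incidenceSign S v * a := by
  rw [sbd_single, Finsupp.finsetSum_apply, sum_eq_single_of_mem v hv, Finsupp.single_eq_same]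
  intro w hw hwv
  exact Finsupp.single_eq_of_ne fun h => hwv (erase_injOn S hv hw h).symm

lemma sbd_single_apply_of_notMem {S T : Finset V} (hT : T ∉ S.image S.erase) (a : ℤ) :
    sbd (Finsupp.single S a) T = 0 := by
  rw [sbd_single, Finsupp.finsetSum_apply]
  exact sum_eq_zero fun v hv => Finsupp.single_eq_of_ne fun h => hT (h ▸ mem_image_of_mem _ hv)

lemma incidenceSign_erase_mul_add {S : Finset V} {v w : V} (hv : v ∈ S) (hvw : v < w) :
    incidenceSign (S.erase v) w * incidenceSign S v +
      incidenceSign (S.erase w) v * incidenceSign S w = 0 := by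
  have hbelow_v : (S.erase w).filter (· < v) = S.filter (· < v) := by
    rw [filter_erase, erase_eq_of_notMem]
    simpa using fun _ => hvw.le
  have hv_below_w : v ∈ S.filter (· < w) := mem_filter.2 ⟨hv, hvw⟩
  obtain ⟨m, hm⟩ := Nat.exists_eq_add_one_of_ne_zero (card_pos.2 ⟨v, hv_below_w⟩).ne'
  unfold incidenceSign
  rw [hbelow_v, filter_erase, card_erase_of_mem hv_below_w, hm]
  simp only [Nat.add_sub_cancel, pow_succ]
  ring

lemma sbd_sbd_single (S : Finset V) (a : ℤ) : sbd (sbd (Finsupp.single S a)) = 0 := by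
  simp only [sbd_single, sbd_finset_sum]
  rw [sum_sigma' S S.erase]
  refine sum_involution (fun p _ => ⟨p.2, p.1⟩) ?cancel ?ne ?mem (fun _ _ => rfl)
  case cancel =>
    rintro ⟨v, w⟩ hp
    simp only [mem_sigma, mem_erase] at hp
    obtain ⟨hv, hwv, hw⟩ := hp
    rw [erase_right_comm, ← Finsupp.single_add, Finsupp.single_eq_zero]
    rcases lt_or_gt_of_ne hwv with h | h
    · linear_combination a * incidenceSign_erase_mul_add hw h
    · linear_combination a * incidenceSign_erase_mul_add hv h
  case ne =>
    rintro ⟨v, w⟩ hp _ h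
    simp only [mem_sigma, mem_erase] at hp
    exact hp.2.1 (congrArg Sigma.fst h)
  case mem =>
    rintro ⟨v, w⟩ hp
    simp only [mem_sigma, mem_erase] at hp ⊢
    exact ⟨hp.2.2, Ne.symm hp.2.1, hp.1⟩

lemma orientable_simplexBoundary {S : Finset V} {d : ℕ} (hS : S.card = d + 2) :
    Orientable (simplexBoundary S) d := by
  set c := sbd (Finsupp.single S (1 : ℤ))
  have hsupport : c.support = S.image S.erase := by
    ext T
    rw [Finsupp.mem_support_iff]
    constructor
    · exact fun hT => by_contra fun h => hT (sbd_single_apply_of_notMem h 1)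
    · intro hT
      obtain ⟨v, hv, rfl⟩ := mem_image.1 hT
      rw [sbd_single_apply_erase hv, mul_one]
      exact pow_ne_zero _ (by norm_num)
  refine ⟨c, by rw [hsupport, dfaces_simplexBoundary hS], fun T hT => ?_, sbd_sbd_single S 1⟩
  obtain ⟨v, hv, rfl⟩ := mem_image.1 (hsupport ▸ hT)
  rw [sbd_single_apply_erase hv, mul_one]
  exact neg_one_pow_eq_or ℤ _

end Orientation

lemma IsCycle.exists_card_eq_subset_verts [Finite V] {Ω : Set (Finset V)} {d : ℕ}
    (hΩ : IsCycle Ω d) :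
    ∃ S : Finset V, ↑S ⊆ verts Ω ∧ S.card = d + 2 := by
  obtain ⟨hcomplex, -, ⟨F, hFΩ, hFd⟩, -, heven⟩ := hΩ
  obtain ⟨f, hfF, hfd⟩ := exists_subset_card_eq (show d ≤ F.card by omega)
  -- `F` contains the `(d-1)`-face `f`, which must lie in a second `d`-face `G`.
  have hcofaces : 1 < {G | G ∈ dfaces Ω d ∧ f ⊆ G}.ncard := by
    have hpos := (Set.ncard_pos (Set.toFinite _)).2
      ⟨F, show F ∈ {G | G ∈ dfaces Ω d ∧ f ⊆ G} from ⟨⟨hFΩ, hFd⟩, hfF⟩⟩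
    obtain ⟨k, hk⟩ := heven f (hcomplex F hFΩ f hfF) hfd
    omega
  obtain ⟨G, ⟨⟨hGΩ, hGd⟩, -⟩, hGF⟩ := Set.exists_ne_of_one_lt_ncard hcofaces F
  obtain ⟨x, hxG, hxF⟩ := not_subset.1 fun h => hGF (eq_of_subset_of_card_le h (by omega))
  refine ⟨insert x F, ?_, by rw [card_insert_of_notMem hxF, hFd]⟩
  intro y hy
  rcases mem_insert.1 hy with rfl | hyF
  · exact ⟨G, hGΩ, hxG⟩
  · exact ⟨F, hFΩ, hyF⟩

lemma DComplete.simplexBoundary_subset {K : Set (Finset V)} {d : ℕ} {S : Finset V}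
    (hK : IsComplex K) (hdc : DComplete K d) (hSK : ↑S ⊆ verts K) (hS : S.card = d + 2) :
    simplexBoundary S ⊆ K := by
  intro T hTS
  obtain ⟨v, hv, hTv⟩ := ssubset_iff_exists_subset_erase.1 hTS
  have hfacet : S.erase v ∈ K :=
    hdc _ ((coe_subset.2 (erase_subset v S)).trans hSK) (by rw [card_erase_of_mem hv]; omega)
  exact hK _ hfacet T hTv

lemma CycleIn.exists_vertexMinimal_verts_subset [Finite V] {Γ Ω : Set (Finset V)} {d : ℕ}
    (hΩ : CycleIn Γ Ω d) :
    ∃ Ω', CycleIn Γ Ω' d ∧ VertexMinimal Γ Ω' d ∧ verts Ω' ⊆ verts Ω := by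
  obtain ⟨_, ⟨Ω', hΩ', hΩ'Ω, rfl⟩, hmin⟩ := wellFounded_lt.has_min
    {W : Set V | ∃ Ω', CycleIn Γ Ω' d ∧ verts Ω' ⊆ verts Ω ∧ verts Ω' = W} ⟨_, Ω, hΩ, le_rfl, rfl⟩
  exact ⟨Ω', hΩ', fun Ω'' hΩ'' hlt => hmin _ ⟨Ω'', hΩ'', hlt.le.trans hΩ'Ω, rfl⟩ hlt, hΩ'Ω⟩

lemma DCycleComplete.exists_orientable_verts_subset [Finite V] [LinearOrder V]
    {Γ Ω : Set (Finset V)} {d : ℕ} (hcc : DCycleComplete Γ d) (hΩ : CycleIn Γ Ω d) :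
    ∃ Ω', CycleIn Γ Ω' d ∧ Orientable Ω' d ∧ verts Ω' ⊆ verts Ω := by
  obtain ⟨Ω', hΩ', hmin, hΩ'Ω⟩ := hΩ.exists_vertexMinimal_verts_subset
  obtain ⟨S, hSΩ', hS⟩ := hΩ'.2.exists_card_eq_subset_verts
  have hsub := (hcc Ω' hΩ' hmin).simplexBoundary_subset hΩ'.2.1 hSΩ' hS
  exact ⟨simplexBoundary S, ⟨hsub.trans hΩ'.1, isCycle_simplexBoundary hS⟩,
    orientable_simplexBoundary hS, (verts_simplexBoundary_subset S).trans (hSΩ'.trans hΩ'Ω)⟩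

theorem dCycleComplete_orientDCycleComplete_general {V : Type*} [DecidableEq V] [Fintype V]
    [LinearOrder V] (Γ : Set (Finset V)) (d : ℕ)
    (hcc : DCycleComplete Γ d) :
    OrientDCycleComplete Γ d := by
  intro Ω hΩ _ hmin
  refine hcc Ω hΩ fun Ω' hΩ' hlt => ?_
  obtain ⟨Ω'', hΩ'', horient, hΩ''Ω'⟩ := hcc.exists_orientable_verts_subset hΩ'
  exact hmin Ω'' hΩ'' horient (hΩ''Ω'.trans_ssubset hlt)

/-- Proposition 4.9.2: any `d`-cycle-complete simplicial complex is
orientably-`d`-cycle-complete. -/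
theorem dCycleComplete_orientDCycleComplete {V : Type*} [DecidableEq V] [Fintype V]
    [LinearOrder V] (Γ : Set (Finset V)) (d : ℕ)
    (hcomplex : IsComplex Γ) (hpure : IsPureD Γ d) (hcc : DCycleComplete Γ d) :
    OrientDCycleComplete Γ d :=
  dCycleComplete_orientDCycleComplete_general Γ d hcc

end ChordedPaper
end

section
/- Let Γ be a pure d-dimensional simplicial complex and let W ⊆ V(Γ). Then the induced subcomplex of the d-closure equals the d-closure of the pure d-skeleton of the induced subcomplex: Δ_d(Γ)_W = Δ_d((Γ_W)^{[d]}). -/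
open Finset

namespace ChordedPaper

variable {V : Type*} [DecidableEq V] [Fintype V]

/-- Lemma 5.5: the `d`-closure commutes with taking induced subcomplexes:
`Δ_d(Γ)_W = Δ_d((Γ_W)^{[d]})`.  Here `Δ_d(Γ)` is taken relative to the vertex set of `Γ`
and `Δ_d((Γ_W)^{[d]})` relative to the vertex set `W` of `Γ_W`. -/
theorem closure_induced_eq {V : Type*} [DecidableEq V] [Fintype V]
    (Γ : Set (Finset V)) (d : ℕ)
    (hcomplex : IsComplex Γ) (hpure : IsPureD Γ d)
    (W : Set V) (hW : W ⊆ verts Γ) :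
    induced (closure (verts Γ) Γ d) W = closure W (skel (induced Γ W) d) d := by
  ext F
  simp only [induced, closure, skel, gen, dfaces, Set.mem_union, Set.mem_setOf_eq]
  constructor
  · rintro ⟨(hF | ⟨_, hcard⟩) | ⟨_, hcard, hall⟩, hFW⟩
    · rcases lt_trichotomy F.card (d + 1) with h | h | h
      · exact Or.inl (Or.inr ⟨hFW, Nat.lt_succ_iff.mp h⟩)
      · exact Or.inl (Or.inl ⟨F, ⟨⟨hF, hFW⟩, h⟩, subset_rfl⟩)
      · exact Or.inr ⟨hFW, h, fun T hT hTc =>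
          ⟨T, ⟨⟨hcomplex F hF T hT, (Finset.coe_subset.mpr hT).trans hFW⟩, hTc⟩, subset_rfl⟩⟩
    · exact Or.inl (Or.inr ⟨hFW, hcard⟩)
    · exact Or.inr ⟨hFW, hcard, fun T hT hTc =>
        ⟨T, ⟨⟨hall T hT hTc, (Finset.coe_subset.mpr hT).trans hFW⟩, hTc⟩, subset_rfl⟩⟩
  · rintro ((⟨G, ⟨⟨hGΓ, hGW⟩, hGc⟩, hFG⟩ | ⟨hFW, hcard⟩) | ⟨hFW, hcard, hall⟩)
    · exact ⟨Or.inl (Or.inl (hcomplex G hGΓ F hFG)), (Finset.coe_subset.mpr hFG).trans hGW⟩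
    · exact ⟨Or.inl (Or.inr ⟨hFW.trans hW, hcard⟩), hFW⟩
    · refine ⟨Or.inr ⟨hFW.trans hW, hcard, fun T hT hTc => ?_⟩, hFW⟩
      obtain ⟨G, ⟨⟨hGΓ, _⟩, hGc⟩, hTG⟩ := hall T hT hTc
      rwa [Finset.eq_of_subset_of_card_le hTG (by omega)]

end ChordedPaper
end

section
/- Let Γ be a simplicial complex and d ≥ 1. Every minimal non-face of Γ has cardinality exactly d+1 (equivalently, the Stanley-Reisner ideal of Γ is minimally generated in degree d+1) if and only if Γ = Δ_d(Γ^{[d]}). -/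
open Finset

namespace ChordedPaper

variable {V : Type*} [DecidableEq V] [Fintype V]

section

variable {V : Type*} {Γ : Set (Finset V)} {d : ℕ}

theorem exists_minNonFace_subset {S : Finset V} (hSv : ↑S ⊆ verts Γ) (hS : S ∉ Γ) :
    ∃ T ⊆ S, MinNonFace Γ T := by
  obtain ⟨T, ⟨hTS, hT⟩, hmin⟩ :=
    wellFounded_lt.has_min {T : Finset V | T ⊆ S ∧ T ∉ Γ} ⟨S, subset_rfl, hS⟩
  refine ⟨T, hTS, (coe_subset.2 hTS).trans hSv, hT, fun U hUT => ?_⟩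
  by_contra hU
  exact hmin U ⟨hUT.subset.trans hTS, hU⟩ hUT

theorem mem_skel_of_mem {T : Finset V} (hT : T ∈ Γ) (hcard : T.card = d + 1) : T ∈ skel Γ d :=
  ⟨T, ⟨hT, hcard⟩, subset_rfl⟩

theorem skel_subset (hΓ : IsComplex Γ) : skel Γ d ⊆ Γ := by
  rintro S ⟨F, ⟨hF, -⟩, hSF⟩
  exact hΓ F hF S hSF

theorem subset_closure_skel (hΓ : IsComplex Γ) : Γ ⊆ closure (verts Γ) (skel Γ d) d := by
  intro F hF
  have hFv : ↑F ⊆ verts Γ := fun v hv => ⟨F, hF, hv⟩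
  rcases lt_trichotomy F.card (d + 1) with hlt | heq | hgt
  · exact Or.inl (Or.inr ⟨hFv, by omega⟩)
  · exact Or.inl (Or.inl (mem_skel_of_mem hF heq))
  · exact Or.inr ⟨hFv, hgt, fun T hTF hT => mem_skel_of_mem (hΓ F hF T hTF) hT⟩

theorem closure_skel_subset (hΓ : IsComplex Γ) (hmin : ∀ S, MinNonFace Γ S → S.card = d + 1) :
    closure (verts Γ) (skel Γ d) d ⊆ Γ := by
  rintro S ((hS | ⟨hSv, hcard⟩) | ⟨hSv, -, hsub⟩)
  · exact skel_subset hΓ hS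
  · by_contra hS
    obtain ⟨T, hTS, hT⟩ := exists_minNonFace_subset hSv hS
    have := card_le_card hTS
    have := hmin T hT
    omega
  · by_contra hS
    obtain ⟨T, hTS, hT⟩ := exists_minNonFace_subset hSv hS
    exact hT.2.1 (skel_subset hΓ (hsub T hTS (hmin T hT)))

theorem MinNonFace.card_eq {S : Finset V} (hS : MinNonFace Γ S)
    (hclosure : closure (verts Γ) (skel Γ d) d ⊆ Γ) : S.card = d + 1 := by
  obtain ⟨hSv, hSΓ, hfaces⟩ := hS
  by_contra hne
  apply hSΓ
  apply hclosure
  rcases lt_or_gt_of_ne hne with hlt | hgt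
  · exact Or.inl (Or.inr ⟨hSv, by omega⟩)
  · refine Or.inr ⟨hSv, hgt, fun T hTS hT => mem_skel_of_mem (hfaces T ?_) hT⟩
    exact hTS.ssubset_of_ne (by rintro rfl; omega)

end

theorem minNonFace_iff_closure_skel_general {V : Type*}
    (Γ : Set (Finset V)) (d : ℕ) (hcomplex : IsComplex Γ) :
    (∀ S : Finset V, MinNonFace Γ S → S.card = d + 1) ↔
      Γ = closure (verts Γ) (skel Γ d) d :=
  ⟨fun hmin => (subset_closure_skel hcomplex).antisymm (closure_skel_subset hcomplex hmin),
    fun h _ hS => hS.card_eq h.symm.subset⟩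

/-- Proposition 5.6: the Stanley–Reisner ideal of `Γ` is minimally
generated in degree `d+1` (i.e. every minimal non-face of `Γ` has cardinality `d+1`)
if and only if `Γ = Δ_d(Γ^{[d]})`. -/
theorem minNonFace_iff_closure_skel {V : Type*} [DecidableEq V] [Fintype V]
    (Γ : Set (Finset V)) (d : ℕ) (hd : 1 ≤ d) (hcomplex : IsComplex Γ) :
    (∀ S : Finset V, MinNonFace Γ S → S.card = d + 1) ↔
      Γ = closure (verts Γ) (skel Γ d) d :=
  minNonFace_iff_closure_skel_general Γ d hcomplex

end ChordedPaper
end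

section
/- Let Γ be a d-chorded simplicial complex and let Ω be a d-dimensional cycle in Γ. Then over ℤ/2ℤ the sum of the d-faces of Ω is a d-boundary in the induced subcomplex Δ_d(Γ)_{V(Ω)}; that is, there is a (d+1)-chain of (d+1)-faces of Δ_d(Γ)_{V(Ω)} whose boundary equals the sum of the d-faces of Ω. -/
open Finset

/-!
Induct on the number of vertices of a `ℤ/2ℤ`-cycle `S` of `d`-faces of `Γ`, then on its number
of faces. If some nonempty proper subset of `S` is itself a cycle, split `S` along it. Otherwise
`S` generates a `d`-path-connected, face-minimal `d`-dimensional cycle. If that cycle is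
`d`-complete, every `(d+1)`-subset of its vertices is a face of `Γ`, so the cone over `S` from one
of its vertices lies in `Δ_d(Γ)`; over `ℤ/2ℤ` the cone is a contracting homotopy, hence bounds
`S`. If it is not, `d`-chordedness yields cycles on fewer vertices that sum to `S` modulo 2.
-/

namespace ChordedPaper

variable {V : Type*}

section Complex

lemma verts_mono {S T : Set (Finset V)} (h : S ⊆ T) : verts S ⊆ verts T :=
  fun _ ⟨F, hF, hv⟩ => ⟨F, h hF, hv⟩

lemma verts_dfaces_subset (K : Set (Finset V)) (d : ℕ) : verts (dfaces K d) ⊆ verts K :=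
  fun _ ⟨F, hF, hv⟩ => ⟨F, hF.1, hv⟩

lemma verts_gen (S : Set (Finset V)) : verts (gen S) = verts S :=
  Set.Subset.antisymm (fun _ ⟨_, ⟨F, hF, hGF⟩, hv⟩ => ⟨F, hF, hGF hv⟩)
    (fun _ ⟨F, hF, hv⟩ => ⟨F, ⟨F, hF, subset_rfl⟩, hv⟩)

lemma induced_mono (K : Set (Finset V)) {W W' : Set V} (h : W ⊆ W') :
    induced K W ⊆ induced K W' :=
  fun _ hF => ⟨hF.1, hF.2.trans h⟩

lemma isComplex_gen (S : Set (Finset V)) : IsComplex (gen S) :=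
  fun _ ⟨F, hF, hGF⟩ _ hH => ⟨F, hF, hH.trans hGF⟩

lemma gen_subset {S K : Set (Finset V)} (hK : IsComplex K) (hS : S ⊆ K) : gen S ⊆ K :=
  fun _ ⟨F, hF, hGF⟩ => hK F (hS hF) _ hGF

lemma dfaces_gen {S : Set (Finset V)} {d : ℕ} (hS : ∀ F ∈ S, F.card = d + 1) :
    dfaces (gen S) d = S := by
  ext G
  refine ⟨fun ⟨⟨F, hF, hGF⟩, hG⟩ => ?_, fun hG => ⟨⟨G, hG, subset_rfl⟩, hS G hG⟩⟩
  rwa [Finset.eq_of_subset_of_card_le hGF (by rw [hG, hS F hF])]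

lemma isPureD_gen {S : Set (Finset V)} {d : ℕ} (hS : ∀ F ∈ S, F.card = d + 1) :
    IsPureD (gen S) d := by
  rintro G ⟨F, hF, hGF⟩
  exact ⟨F, (dfaces_gen hS).symm ▸ hF, hGF⟩

end Complex

section Finite

variable [Fintype V]

lemma lex_ncard_verts_induction {P : Set (Finset V) → Prop}
    (h : ∀ S, (∀ T, (verts T).ncard < (verts S).ncard → P T) → (∀ T ⊂ S, P T) → P S)
    (S : Set (Finset V)) : P S :=
  (InvImage.wf (fun S : Set (Finset V) => toLex ((verts S).ncard, S.ncard))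
    wellFounded_lt).induction S fun S ih =>
      h S (fun T hT => ih T (Prod.Lex.toLex_lt_toLex.mpr (Or.inl hT))) fun T hT =>
        ih T (Prod.Lex.toLex_lt_toLex.mpr
          ((Set.ncard_le_ncard (verts_mono hT.subset)).lt_or_eq.imp id
            fun h => ⟨h, Set.ncard_lt_ncard hT⟩))

noncomputable def chainOf (S : Set (Finset V)) : Finset V →₀ ZMod 2 :=
  Finsupp.ofSupportFinite (S.indicator 1) (Set.toFinite _)

open scoped Classical in
lemma chainOf_apply (S : Set (Finset V)) (G : Finset V) :
    chainOf S G = if G ∈ S then 1 else 0 := by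
  rw [chainOf, Finsupp.ofSupportFinite_coe, Set.indicator_apply, Pi.one_apply]

lemma chainOf_empty : chainOf (∅ : Set (Finset V)) = 0 := by
  ext G
  simp [chainOf_apply]

lemma chainOf_support (c : Finset V →₀ ZMod 2) : chainOf ↑c.support = c := by
  ext G
  rw [chainOf_apply, Finset.mem_coe, Finsupp.mem_support_iff]
  split_ifs with hG
  · exact (Fin.eq_one_of_ne_zero _ hG).symm
  · exact (not_not.mp hG).symm

lemma mem_support_chainOf {S : Set (Finset V)} {F : Finset V} :
    F ∈ (chainOf S).support ↔ F ∈ S := by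
  classical
  rw [Finsupp.mem_support_iff, chainOf_apply]
  split_ifs with h <;> simp [h]

lemma chainOf_eq_add_diff {S T : Set (Finset V)} (h : T ⊆ S) :
    chainOf S = chainOf T + chainOf (S \ T) := by
  ext G
  simp only [Finsupp.add_apply, chainOf_apply, Set.mem_sdiff]
  by_cases hT : G ∈ T
  · simp [hT, h hT]
  · by_cases hS : G ∈ S <;> simp [hS, hT]

lemma sum_chainOf_eq_chainOf {ι : Type*} [Fintype ι] {D : ι → Set (Finset V)}
    {S : Set (Finset V)} (hodd : ∀ F ∈ S, Odd {i | F ∈ D i}.ncard)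
    (heven : ∀ F ∉ S, Even {i | F ∈ D i}.ncard) :
    ∑ i, chainOf (D i) = chainOf S := by
  ext F
  have hcount : (∑ i, chainOf (D i)) F = ({i | F ∈ D i}.ncard : ZMod 2) := by
    simp only [Finsupp.finsetSum_apply, chainOf_apply, Finset.sum_boole]
    rw [← Set.ncard_coe_finset]
    simp
  rw [hcount, chainOf_apply]
  split_ifs with hF
  · exact ZMod.natCast_eq_one_iff_odd.mpr (hodd F hF)
  · exact ZMod.natCast_eq_zero_iff_even.mpr (heven F hF)

end Finite

section Chains

variable [DecidableEq V]

def IsBoundary {R : Type*} [AddCommMonoid R] (K : Set (Finset V)) (i : ℕ)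
    (c : Finset V →₀ R) : Prop :=
  ∃ b : Finset V →₀ R, ChainOn K (i + 1) b ∧ ubd b = c

noncomputable def cone {R : Type*} [AddCommMonoid R] (v : V) :
    (Finset V →₀ R) →+ (Finset V →₀ R) :=
  Finsupp.liftAddHom fun F => if v ∈ F then 0 else Finsupp.singleAddHom (insert v F)

lemma adj_of_subset_of_subset {S : Set (Finset V)} {d : ℕ} {F G g : Finset V} (hF : F ∈ S)
    (hG : G ∈ S) (hFd : F.card = d + 1) (hGd : G.card = d + 1) (hg : g.card = d)
    (hgF : g ⊆ F) (hgG : g ⊆ G) (hFG : F ≠ G) : adj S d F G := by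
  refine ⟨hF, hG, le_antisymm ?_ (hg ▸ Finset.card_le_card (Finset.subset_inter hgF hgG))⟩
  by_contra! hlt
  have hFsub : F ⊆ G := Finset.inter_eq_left.mp
    (Finset.eq_of_subset_of_card_le Finset.inter_subset_left (by omega))
  exact hFG (Finset.eq_of_subset_of_card_le hFsub (by omega))

section Boundary

variable {R : Type*} [AddCommMonoid R]

lemma ubd_zero : ubd (0 : Finset V →₀ R) = 0 :=
  Finsupp.sum_zero_index

lemma ubd_add (c c' : Finset V →₀ R) : ubd (c + c') = ubd c + ubd c' :=
  Finsupp.sum_add_index' (by simp) fun F a b => by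
    simp only [Finsupp.single_add, Finset.sum_add_distrib]

lemma ubd_single (F : Finset V) (a : R) :
    ubd (Finsupp.single F a) = ∑ v ∈ F, Finsupp.single (F.erase v) a :=
  Finsupp.sum_single_index (by simp)

lemma cone_single (v : V) (F : Finset V) (a : R) :
    cone v (Finsupp.single F a) = if v ∈ F then 0 else Finsupp.single (insert v F) a := by
  simp only [cone, Finsupp.liftAddHom_apply_single]
  split_ifs <;> rfl

lemma exists_of_mem_support_cone {v : V} {c : Finset V →₀ R} {G : Finset V}
    (hG : G ∈ (cone v c).support) : ∃ F ∈ c.support, v ∉ F ∧ insert v F = G := by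
  rw [cone, Finsupp.liftAddHom_apply] at hG
  obtain ⟨F, hF, hGF⟩ := Finset.mem_biUnion.mp (Finsupp.support_sum hG)
  by_cases hv : v ∈ F
  · simp [hv] at hGF
  · simp only [hv, if_false, Finsupp.singleAddHom_apply] at hGF
    exact ⟨F, hF, hv, (Finset.mem_singleton.mp (Finsupp.support_single_subset hGF)).symm⟩

lemma isBoundary_zero (K : Set (Finset V)) (i : ℕ) : IsBoundary K i (0 : Finset V →₀ R) :=
  ⟨0, by simp [ChainOn], ubd_zero⟩

lemma IsBoundary.add {K : Set (Finset V)} {i : ℕ} {c c' : Finset V →₀ R}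
    (hc : IsBoundary K i c) (hc' : IsBoundary K i c') : IsBoundary K i (c + c') := by
  obtain ⟨b, hb, rfl⟩ := hc
  obtain ⟨b', hb', rfl⟩ := hc'
  refine ⟨b + b', fun F hF => ?_, ubd_add b b'⟩
  rcases Finset.mem_union.mp (Finsupp.support_add hF) with h | h
  exacts [hb F h, hb' F h]

lemma IsBoundary.sum {ι : Type*} {K : Set (Finset V)} {i : ℕ} {s : Finset ι}
    {f : ι → Finset V →₀ R} (hf : ∀ j ∈ s, IsBoundary K i (f j)) :
    IsBoundary K i (∑ j ∈ s, f j) :=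
  Finset.sum_induction f _ (fun _ _ => IsBoundary.add) (isBoundary_zero K i) hf

lemma IsBoundary.mono {K K' : Set (Finset V)} {i : ℕ} {c : Finset V →₀ R} (h : K ⊆ K')
    (hc : IsBoundary K i c) : IsBoundary K' i c := by
  obtain ⟨b, hb, rfl⟩ := hc
  exact ⟨b, fun F hF => ⟨h (hb F hF).1, (hb F hF).2⟩, rfl⟩

end Boundary

lemma ubd_cone_add_cone_ubd {R : Type*} [Ring R] [CharP R 2] (v : V) (c : Finset V →₀ R) :
    ubd (cone v c) + cone v (ubd c) = c := by
  induction c using Finsupp.induction_linear with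
  | zero => simp [ubd_zero]
  | add c c' hc hc' =>
    rw [map_add, ubd_add, ubd_add, map_add]
    nth_rw 3 [← hc, ← hc']
    abel
  | single F a =>
    rw [cone_single, ubd_single, map_sum]
    simp only [cone_single]
    by_cases hv : v ∈ F
    · rw [if_pos hv, ubd_zero, zero_add, Finset.sum_eq_single v]
      · rw [if_neg (F.notMem_erase v), F.insert_erase hv]
      · intro u _ huv
        rw [if_pos (Finset.mem_erase.mpr ⟨Ne.symm huv, hv⟩)]
      · exact fun h => absurd hv h
    · have hne : ∀ u ∈ F, v ≠ u := fun u hu h => hv (h ▸ hu)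
      rw [if_neg hv, ubd_single, Finset.sum_insert hv, Finset.erase_insert hv,
        Finset.sum_congr rfl fun u hu => by
          rw [Finset.erase_insert_of_ne (hne u hu)],
        Finset.sum_congr rfl fun u hu => if_neg fun h => hv (Finset.mem_of_mem_erase h),
        add_assoc, ← two_nsmul]
      ext G
      simp [CharTwo.two_eq_zero]

variable [Fintype V]

lemma ubd_apply {R : Type*} [AddCommMonoid R] (c : Finset V →₀ R) (g : Finset V) :
    ubd c g = ∑ v ∈ gᶜ, c (insert v g) := by
  induction c using Finsupp.induction_linear with
  | zero => simp [ubd_zero]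
  | add c c' hc hc' => simp [ubd_add, hc, hc', Finset.sum_add_distrib]
  | single F a =>
    have key : ∀ v, (v ∈ F ∧ F.erase v = g) ↔ (v ∉ g ∧ F = insert v g) := fun v =>
      ⟨fun ⟨hv, he⟩ => he ▸ ⟨F.notMem_erase v, (F.insert_erase hv).symm⟩,
        fun ⟨hv, he⟩ => he ▸ ⟨Finset.mem_insert_self v g, Finset.erase_insert hv⟩⟩
    simp only [ubd_single, Finsupp.finsetSum_apply, Finsupp.single_apply]
    rw [← Finset.sum_filter, ← Finset.sum_filter]
    exact Finset.sum_congr (by ext v; simpa using key v) fun _ _ => rfl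

open scoped Classical in
lemma ubd_chainOf_apply (S : Set (Finset V)) (g : Finset V) :
    ubd (chainOf S) g = (#{v ∈ gᶜ | insert v g ∈ S} : ZMod 2) := by
  simp only [ubd_apply, chainOf_apply, Finset.sum_boole]

open scoped Classical in
lemma ncard_sep_superset_eq_card_insert {S : Set (Finset V)} {g : Finset V}
    (hS : ∀ F ∈ S, F.card = g.card + 1) :
    {F ∈ S | g ⊆ F}.ncard = #{v ∈ gᶜ | insert v g ∈ S} := by
  rw [← Set.ncard_coe_finset, ← Set.InjOn.ncard_image (f := fun v => insert v g)]
  · congr 1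
    ext F
    simp only [Set.mem_image, Finset.coe_filter, Finset.mem_compl, Set.mem_ofPred_eq]
    constructor
    · rintro ⟨hF, hgF⟩
      obtain ⟨v, hv, rfl⟩ := Finset.exists_eq_insert_iff.mpr ⟨hgF, (hS F hF).symm⟩
      exact ⟨v, ⟨hv, hF⟩, rfl⟩
    · rintro ⟨v, ⟨-, hv⟩, rfl⟩
      exact ⟨hv, Finset.subset_insert v g⟩
  · intro v hv w _ h
    simp only [Finset.coe_filter, Finset.mem_compl, Set.mem_ofPred_eq] at hv
    exact (Finset.insert_inj hv.1).mp h

lemma ubd_chainOf_eq_zero_iff {S : Set (Finset V)} {d : ℕ} (hS : ∀ F ∈ S, F.card = d + 1) :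
    ubd (chainOf S) = 0 ↔ ∀ g : Finset V, g.card = d → Even {F ∈ S | g ⊆ F}.ncard := by
  classical
  simp only [Finsupp.ext_iff, Finsupp.coe_zero, Pi.zero_apply, ubd_chainOf_apply,
    ZMod.natCast_eq_zero_iff_even]
  refine ⟨fun h g hg => ?_, fun h g => ?_⟩
  · rw [ncard_sep_superset_eq_card_insert (hg ▸ hS)]
    exact h g
  · by_cases hg : g.card = d
    · rw [← ncard_sep_superset_eq_card_insert (hg ▸ hS)]
      exact h g hg
    · have hempty : {v ∈ gᶜ | insert v g ∈ S} = ∅ :=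
        Finset.filter_eq_empty_iff.mpr fun v hv hvS => hg (by
          have := hS _ hvS
          rw [Finset.card_insert_of_notMem (Finset.mem_compl.mp hv)] at this
          omega)
      rw [hempty, Finset.card_empty]
      exact Even.zero

lemma IsCycle.ubd_chainOf_dfaces_eq_zero {Ω : Set (Finset V)} {d : ℕ} (h : IsCycle Ω d) :
    ubd (chainOf (dfaces Ω d)) = 0 := by
  refine (ubd_chainOf_eq_zero_iff fun F hF => hF.2).mpr fun g hg => ?_
  by_cases hgΩ : g ∈ Ω
  · exact h.2.2.2.2 g hgΩ hg
  · have hempty : {F ∈ dfaces Ω d | g ⊆ F} = ∅ :=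
      Set.eq_empty_of_forall_notMem fun F ⟨hF, hgF⟩ => hgΩ (h.1 F hF.1 g hgF)
    rw [hempty, Set.ncard_empty]
    exact Even.zero

lemma isCycle_gen {S : Set (Finset V)} {d : ℕ} (hS : ∀ F ∈ S, F.card = d + 1)
    (hne : S.Nonempty) (hconn : PathConn (gen S) d) (hz : ubd (chainOf S) = 0) :
    IsCycle (gen S) d := by
  refine ⟨isComplex_gen S, isPureD_gen hS, ?_, hconn, fun f _ hf => ?_⟩
  · rwa [dfaces_gen hS]
  · rw [dfaces_gen hS]
    exact (ubd_chainOf_eq_zero_iff hS).mp hz f hf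

/-- The `d`-faces of `S` through a given `(d-1)`-face are pairwise adjacent, so they all lie in
the same `d`-path component. -/
lemma ubd_chainOf_pathComponent_eq_zero {S : Set (Finset V)} {d : ℕ} (hS : ∀ F ∈ S, F.card = d + 1)
    (hz : ubd (chainOf S) = 0) (F₀ : Finset V) :
    ubd (chainOf {F ∈ S | Relation.ReflTransGen (adj S d) F₀ F}) = 0 := by
  rw [ubd_chainOf_eq_zero_iff fun F hF => hS F hF.1]
  intro g hg
  by_cases hT : ∃ F₁ ∈ S, Relation.ReflTransGen (adj S d) F₀ F₁ ∧ g ⊆ F₁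
  · obtain ⟨F₁, hF₁, hreach, hgF₁⟩ := hT
    convert (ubd_chainOf_eq_zero_iff hS).mp hz g hg using 2
    ext F
    refine ⟨fun ⟨⟨hF, _⟩, hgF⟩ => ⟨hF, hgF⟩, fun ⟨hF, hgF⟩ => ⟨⟨hF, ?_⟩, hgF⟩⟩
    rcases eq_or_ne F₁ F with rfl | hne
    · exact hreach
    · exact hreach.tail
        (adj_of_subset_of_subset hF₁ hF (hS F₁ hF₁) (hS F hF) hg hgF₁ hgF hne)
  · have hempty : {F ∈ {F ∈ S | Relation.ReflTransGen (adj S d) F₀ F} | g ⊆ F} = ∅ :=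
      Set.eq_empty_of_forall_notMem fun F ⟨⟨hF, hreach⟩, hgF⟩ => hT ⟨F, hF, hreach, hgF⟩
    rw [hempty, Set.ncard_empty]
    exact Even.zero

lemma pathConn_gen_of_minimal {S : Set (Finset V)} {d : ℕ} (hS : ∀ F ∈ S, F.card = d + 1)
    (hz : ubd (chainOf S) = 0) (hmin : ∀ T ⊂ S, T.Nonempty → ubd (chainOf T) ≠ 0) :
    PathConn (gen S) d := by
  rw [PathConn, dfaces_gen hS]
  intro F hF G hG
  by_contra hFG
  exact hmin _ (ssubset_of_subset_not_subset (Set.sep_subset _ _) fun h => hFG (h hG).2)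
    ⟨F, hF, .refl⟩ (ubd_chainOf_pathComponent_eq_zero hS hz F)

lemma faceMinimal_gen_of_minimal {S : Set (Finset V)} {d : ℕ} (hS : ∀ F ∈ S, F.card = d + 1)
    (hmin : ∀ T ⊂ S, T.Nonempty → ubd (chainOf T) ≠ 0) : FaceMinimal (gen S) d := by
  intro T hT hcyc
  rw [dfaces_gen hS] at hT
  have hTd : dfaces (gen T) d = T := dfaces_gen fun F hF => hS F (hT.subset hF)
  exact hmin T hT (hTd ▸ hcyc.2.2.1) (hTd ▸ hcyc.ubd_chainOf_dfaces_eq_zero)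

lemma isBoundary_closure_of_dComplete {Γ S : Set (Finset V)} {d : ℕ} (hSΓ : gen S ⊆ Γ)
    (hS : ∀ F ∈ S, F.card = d + 1) (hne : S.Nonempty) (hz : ubd (chainOf S) = 0)
    (hDC : DComplete (gen S) d) :
    IsBoundary (induced (closure (verts Γ) Γ d) (verts S)) d (chainOf S) := by
  obtain ⟨F₀, hF₀⟩ := hne
  obtain ⟨v, hv⟩ : F₀.Nonempty := Finset.card_pos.mp (by rw [hS F₀ hF₀]; omega)
  refine ⟨cone v (chainOf S), fun G hG => ?_, by
    simpa [hz] using ubd_cone_add_cone_ubd v (chainOf S)⟩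
  obtain ⟨F, hF, hvF, rfl⟩ := exists_of_mem_support_cone hG
  rw [mem_support_chainOf] at hF
  have hcard : (insert v F).card = d + 1 + 1 := by
    rw [Finset.card_insert_of_notMem hvF, hS F hF]
  have hverts : ↑(insert v F) ⊆ verts S := by
    rw [Finset.coe_insert]
    exact Set.insert_subset ⟨F₀, hF₀, hv⟩ fun u hu => ⟨F, hF, hu⟩
  have hVΓ : verts S ⊆ verts Γ := verts_gen S ▸ verts_mono hSΓ
  refine ⟨⟨Or.inr ⟨hverts.trans hVΓ, by omega, fun T hT hTd => hSΓ (hDC T ?_ hTd)⟩, hverts⟩,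
    hcard⟩
  rw [verts_gen]
  exact (Finset.coe_subset.mpr hT).trans hverts

lemma isBoundary_of_chordSet {Γ K S C : Set (Finset V)} {d : ℕ} (hSΓ : S ⊆ dfaces Γ d)
    (hC : ChordSet Γ (gen S) d C)
    (ih : ∀ T, (verts T).ncard < (verts S).ncard → T ⊆ dfaces Γ d → ubd (chainOf T) = 0 →
      IsBoundary (induced K (verts T)) d (chainOf T)) :
    IsBoundary (induced K (verts S)) d (chainOf S) := by
  obtain ⟨hCΓ, -, hCS, n, Ω, -, hcyc, hunion, heven, hodd, hsmall⟩ := hC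
  rw [dfaces_gen fun F hF => (hSΓ hF).2] at hunion hodd
  simp only [verts_gen] at hCS hsmall
  have hΩSC : ∀ i, dfaces (Ω i) d ⊆ S ∪ C :=
    fun i => hunion ▸ Set.subset_iUnion (fun i => dfaces (Ω i) d) i
  have hsum : ∑ i, chainOf (dfaces (Ω i) d) = chainOf S := by
    refine sum_chainOf_eq_chainOf hodd fun F hF => ?_
    by_cases hFC : F ∈ C
    · exact heven F hFC
    · have hempty : {i | F ∈ dfaces (Ω i) d} = ∅ :=
        Set.eq_empty_of_forall_notMem fun i hi => (hΩSC i hi).elim hF hFC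
      rw [hempty, Set.ncard_empty]
      exact Even.zero
  rw [← hsum]
  refine IsBoundary.sum fun i _ => (ih _ ?_ ?_ (hcyc i).ubd_chainOf_dfaces_eq_zero).mono
    (induced_mono K ?_)
  · exact (Set.ncard_le_ncard (verts_dfaces_subset _ d)).trans_lt (hsmall i)
  · exact (hΩSC i).trans (Set.union_subset hSΓ hCΓ)
  · rintro u ⟨F, hF, hu⟩
    rcases hΩSC i hF with hFS | hFC
    exacts [⟨F, hFS, hu⟩, hCS F hFC hu]

theorem isBoundary_closure_chainOf {Γ : Set (Finset V)} {d : ℕ} (hΓ : IsComplex Γ)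
    (hchorded : DChorded Γ d) (S : Set (Finset V)) (hSΓ : S ⊆ dfaces Γ d)
    (hz : ubd (chainOf S) = 0) :
    IsBoundary (induced (closure (verts Γ) Γ d) (verts S)) d (chainOf S) := by
  induction S using lex_ncard_verts_induction with
  | h S ihv ihs =>
  have hS : ∀ F ∈ S, F.card = d + 1 := fun F hF => (hSΓ hF).2
  by_cases hsplit : ∃ T ⊂ S, T.Nonempty ∧ ubd (chainOf T) = 0
  · obtain ⟨T, hTS, hTne, hTz⟩ := hsplit
    have hST : S \ T ⊂ S := sdiff_lt hTS.subset hTne.ne_empty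
    rw [chainOf_eq_add_diff hTS.subset] at hz ⊢
    rw [ubd_add, hTz, zero_add] at hz
    exact ((ihs T hTS (hTS.subset.trans hSΓ) hTz).mono
      (induced_mono _ (verts_mono hTS.subset))).add
        ((ihs _ hST (hST.subset.trans hSΓ) hz).mono (induced_mono _ (verts_mono hST.subset)))
  have hmin : ∀ T ⊂ S, T.Nonempty → ubd (chainOf T) ≠ 0 :=
    fun T hTS hTne hTz => hsplit ⟨T, hTS, hTne, hTz⟩
  rcases S.eq_empty_or_nonempty with rfl | hne
  · rw [chainOf_empty]
    exact isBoundary_zero _ _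
  have hgen : gen S ⊆ Γ := gen_subset hΓ fun F hF => (hSΓ hF).1
  by_cases hDC : DComplete (gen S) d
  · exact isBoundary_closure_of_dComplete hgen hS hne hz hDC
  have hcyc : IsCycle (gen S) d := isCycle_gen hS hne (pathConn_gen_of_minimal hS hz hmin) hz
  obtain ⟨C, hC⟩ := hchorded (gen S) ⟨hgen, hcyc⟩ (faceMinimal_gen_of_minimal hS hmin) hDC
  exact isBoundary_of_chordSet hSΓ hC ihv

end Chains

theorem cycle_is_boundary_in_closure_general {V : Type*} [DecidableEq V] [Fintype V]
    (Γ : Set (Finset V)) (d : ℕ)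
    (hcomplex : IsComplex Γ) (hchorded : DChorded Γ d)
    (Ω : Set (Finset V)) (hΩ : CycleIn Γ Ω d)
    (c : Finset V →₀ ZMod 2) (hc : ↑c.support = dfaces Ω d) :
    ∃ b : Finset V →₀ ZMod 2,
      ChainOn (induced (closure (verts Γ) Γ d) (verts Ω)) (d + 1) b ∧ ubd b = c := by
  obtain ⟨hΩΓ, hcyc⟩ := hΩ
  rw [← chainOf_support c, hc]
  exact (isBoundary_closure_chainOf hcomplex hchorded _ (fun F hF => ⟨hΩΓ hF.1, hF.2⟩)
    hcyc.ubd_chainOf_dfaces_eq_zero).mono (induced_mono _ (verts_dfaces_subset Ω d))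

/-- Lemma 5.2: if `Ω` is a `d`-dimensional cycle in a `d`-chorded complex
`Γ`, then over `ℤ/2ℤ` the sum of the `d`-faces of `Ω` is a `d`-boundary in
`Δ_d(Γ)_{V(Ω)}`. -/
theorem cycle_is_boundary_in_closure {V : Type*} [DecidableEq V] [Fintype V]
    (Γ : Set (Finset V)) (d : ℕ)
    (hcomplex : IsComplex Γ) (hpure : IsPureD Γ d) (hchorded : DChorded Γ d)
    (Ω : Set (Finset V)) (hΩ : CycleIn Γ Ω d)
    (c : Finset V →₀ ZMod 2) (hc : ↑c.support = dfaces Ω d) :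
    ∃ b : Finset V →₀ ZMod 2,
      ChainOn (induced (closure (verts Γ) Γ d) (verts Ω)) (d + 1) b ∧ ubd b = c :=
  cycle_is_boundary_in_closure_general Γ d hcomplex hchorded Ω hΩ c hc

end ChordedPaper
end

section
/- Let Ω be a face-minimal d-dimensional cycle in a simplicial complex Γ, and suppose Ω is not d-complete. If, over ℤ/2ℤ, the sum of the d-faces of Ω is the boundary of a (d+1)-chain of (d+1)-faces of the induced subcomplex Γ_{V(Ω)}, then Ω has a chord set in Γ. -/
open Finset

namespace ChordedPaper

variable {V : Type*} [DecidableEq V] [Fintype V]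

set_option linter.unusedSectionVars false
set_option linter.unusedVariables false

/-! ### auxiliary lemmas -/

lemma zmod2_eq_one {x : ZMod 2} (h : x ≠ 0) : x = 1 := by revert h; revert x; decide

/-- the boundary complex of a `(d+1)`-simplex -/
def sbdry (F : Finset V) (d : ℕ) : Set (Finset V) := {G | G ⊆ F ∧ G.card ≤ d + 1}

lemma dfaces_sbdry (F : Finset V) (d : ℕ) :
    dfaces (sbdry F d) d = {G | G ⊆ F ∧ G.card = d + 1} := by
  ext G
  constructor
  · rintro ⟨⟨h1, _⟩, h3⟩; exact ⟨h1, h3⟩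
  · rintro ⟨h1, h2⟩; exact ⟨⟨h1, h2.le⟩, h2⟩

lemma verts_sbdry (F : Finset V) (d : ℕ) : verts (sbdry F d) = ↑F := by
  ext v
  constructor
  · rintro ⟨G, ⟨hG, _⟩, hv⟩; exact hG hv
  · intro hv
    exact ⟨{v}, ⟨Finset.singleton_subset_iff.2 hv, by simp⟩, by simp⟩

lemma erase_mem_dfaces_sbdry {F : Finset V} {d : ℕ} (hF : F.card = d + 2) {x : V}
    (hx : x ∈ F) : F.erase x ∈ dfaces (sbdry F d) d := by
  rw [dfaces_sbdry]
  exact ⟨Finset.erase_subset _ _, by rw [Finset.card_erase_of_mem hx, hF]; omega⟩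

lemma dface_sbdry_eq_erase {F G : Finset V} {d : ℕ} (hF : F.card = d + 2)
    (hG : G ⊆ F) (hGc : G.card = d + 1) : ∃ x ∈ F, G = F.erase x ∧ x ∉ G := by
  have hcard : (F \ G).card = 1 := by
    rw [Finset.card_sdiff_of_subset hG, hF, hGc]; omega
  obtain ⟨x, hx⟩ := Finset.card_eq_one.1 hcard
  have hxF : x ∈ F := by
    have : x ∈ F \ G := hx ▸ Finset.mem_singleton_self x
    exact (Finset.mem_sdiff.1 this).1
  have hxG : x ∉ G := by
    have : x ∈ F \ G := hx ▸ Finset.mem_singleton_self x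
    exact (Finset.mem_sdiff.1 this).2
  refine ⟨x, hxF, ?_, hxG⟩
  apply Finset.eq_of_subset_of_card_le (Finset.subset_erase.2 ⟨hG, hxG⟩)
  rw [Finset.card_erase_of_mem hxF, hF, hGc]; omega

lemma isCycle_sbdry {F : Finset V} {d : ℕ} (hF : F.card = d + 2) :
    IsCycle (sbdry F d) d := by
  have hne : F.Nonempty := Finset.card_pos.1 (by omega)
  refine ⟨?_, ?_, ?_, ?_, ?_⟩
  · rintro G ⟨hG1, hG2⟩ H hH
    exact ⟨hH.trans hG1, (Finset.card_le_card hH).trans hG2⟩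
  · rintro G ⟨hG1, hG2⟩
    obtain ⟨H, hGH, hHF, hHc⟩ := Finset.exists_subsuperset_card_eq hG1 hG2 (by omega)
    exact ⟨H, by rw [dfaces_sbdry]; exact ⟨hHF, hHc⟩, hGH⟩
  · obtain ⟨x, hx⟩ := hne
    exact ⟨F.erase x, erase_mem_dfaces_sbdry hF hx⟩
  · intro G hG H hH
    rw [dfaces_sbdry] at hG hH
    rcases eq_or_ne G H with rfl | hne'
    · exact Relation.ReflTransGen.refl
    · refine Relation.ReflTransGen.single ?_
      refine ⟨by rw [dfaces_sbdry]; exact hG, by rw [dfaces_sbdry]; exact hH, ?_⟩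
      have hu : (G ∪ H).card = d + 2 := by
        have h1 : G ∪ H ⊆ F := Finset.union_subset hG.1 hH.1
        have h2 : (G ∪ H).card ≤ d + 2 := by
          calc (G ∪ H).card ≤ F.card := Finset.card_le_card h1
            _ = d + 2 := hF
        have h3 : d + 1 ≤ (G ∪ H).card := by
          calc d + 1 = G.card := hG.2.symm
            _ ≤ (G ∪ H).card := Finset.card_le_card Finset.subset_union_left
        have h5 : (G ∪ H).card ≠ d + 1 := by
          intro h
          have hGe : G = G ∪ H := Finset.eq_of_subset_of_card_le Finset.subset_union_left
            (by rw [h, hG.2])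
          have hHe : H = G ∪ H := Finset.eq_of_subset_of_card_le Finset.subset_union_right
            (by rw [h, hH.2])
          exact hne' (hGe.trans hHe.symm)
        omega
      have hG2 := hG.2
      have hH2 := hH.2
      have := Finset.card_union_add_card_inter G H
      omega
  · rintro f ⟨hf1, hf2⟩ hfd
    have hfF : f ⊆ F := hf1
    have hWf : (F \ f).card = 2 := by rw [Finset.card_sdiff_of_subset hfF, hF, hfd]; omega
    have himg : {G | G ∈ dfaces (sbdry F d) d ∧ f ⊆ G}
        = (fun x => insert x f) '' ↑(F \ f) := by
      ext G
      simp only [Set.mem_setOf_eq, Set.mem_image, Finset.coe_sdiff, dfaces_sbdry]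
      constructor
      · rintro ⟨⟨hGF, hGc⟩, hfG⟩
        have hc1 : (G \ f).card = 1 := by rw [Finset.card_sdiff_of_subset hfG, hGc, hfd]; omega
        obtain ⟨x, hx⟩ := Finset.card_eq_one.1 hc1
        have hxG : x ∈ G \ f := hx ▸ Finset.mem_singleton_self x
        rw [Finset.mem_sdiff] at hxG
        have hGe : insert x f = G := Finset.eq_of_subset_of_card_le
          (Finset.insert_subset hxG.1 hfG)
          (by rw [Finset.card_insert_of_notMem hxG.2, hGc, hfd])
        exact ⟨x, Set.mem_diff_of_mem (hGF hxG.1) hxG.2, hGe⟩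
      · rintro ⟨x, hx, rfl⟩
        simp only [Set.mem_diff, Finset.mem_coe] at hx
        refine ⟨⟨Finset.insert_subset hx.1 hfF, ?_⟩, Finset.subset_insert _ _⟩
        rw [Finset.card_insert_of_notMem hx.2, hfd]
    rw [himg]
    have hinj : Set.InjOn (fun x => insert x f) ↑(F \ f) := by
      intro x hx y hy hxy
      simp only at hxy
      simp only [Finset.coe_sdiff, Set.mem_diff, Finset.mem_coe] at hx hy
      by_contra hne'
      have : x ∈ insert y f := by rw [← hxy]; exact Finset.mem_insert_self x f
      rcases Finset.mem_insert.1 this with h | h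
      · exact hne' h
      · exact hx.2 h
    rw [Set.ncard_image_of_injOn hinj, Set.ncard_coe_finset, hWf]
    exact even_two

lemma mem_verts_of_mem {Ω : Set (Finset V)} {G : Finset V} (hG : G ∈ Ω) :
    ↑G ⊆ verts Ω := fun v hv => ⟨G, hG, hv⟩

/-- a cycle with at most `d+2` vertices is `d`-complete -/
lemma small_cycle_complete {Ω : Set (Finset V)} {d : ℕ} (hcyc : IsCycle Ω d)
    (hsmall : (verts Ω).ncard ≤ d + 2) : DComplete Ω d := by
  classical
  obtain ⟨hcx, hpure, ⟨G₀, hG₀⟩, hpc, heven⟩ := hcyc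
  set W : Finset V := (verts Ω).toFinset with hW
  have hWcoe : ↑W = verts Ω := Set.coe_toFinset _
  have hWcard : W.card ≤ d + 2 := by
    rw [← Set.ncard_coe_finset W, hWcoe]; exact hsmall
  have hGW : ∀ {G : Finset V}, G ∈ dfaces Ω d → G ⊆ W := by
    intro G hG
    intro v hv
    rw [← Finset.mem_coe, hWcoe]
    exact mem_verts_of_mem hG.1 hv
  have hG₀W : G₀ ⊆ W := hGW hG₀
  have hWlarge : d + 1 ≤ W.card := hG₀.2 ▸ Finset.card_le_card hG₀W
  intro S hS hSc
  have hSW : S ⊆ W := fun v hv => by rw [← Finset.mem_coe, hWcoe]; exact hS hv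
  rcases Nat.lt_or_ge W.card (d + 2) with hc | hc
  · -- W.card = d + 1
    have hWc : W.card = d + 1 := by omega
    have hSeq : S = W := Finset.eq_of_subset_of_card_le hSW (by omega)
    have hGeq : G₀ = W := Finset.eq_of_subset_of_card_le hG₀W (by rw [hWc, hG₀.2])
    rw [hSeq, ← hGeq]; exact hG₀.1
  · -- W.card = d + 2
    have hWc : W.card = d + 2 := by omega
    -- transfer lemma
    have key : ∀ v ∈ W, ∀ w ∈ W, W.erase v ∈ dfaces Ω d → W.erase w ∈ dfaces Ω d := by
      intro v hv w hw hev
      rcases eq_or_ne v w with rfl | hvw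
      · exact hev
      · set f : Finset V := (W.erase v).erase w with hf
        have hwv : w ∈ W.erase v := Finset.mem_erase.2 ⟨Ne.symm hvw, hw⟩
        have hfc : f.card = d := by
          rw [hf, Finset.card_erase_of_mem hwv, Finset.card_erase_of_mem hv, hWc]; omega
        have hfΩ : f ∈ Ω := hcx _ hev.1 f (Finset.erase_subset _ _)
        have hEv := heven f hfΩ hfc
        set T : Set (Finset V) := {F | F ∈ dfaces Ω d ∧ f ⊆ F} with hT
        have hfW : f ⊆ W := (Finset.erase_subset _ _).trans (Finset.erase_subset _ _)
        have hvf : v ∉ f := fun h => (Finset.mem_erase.1 ((Finset.erase_subset _ _) h)).1 rfl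
        have hwf : w ∉ f := fun h => (Finset.mem_erase.1 h).1 rfl
        have hcomm : f = (W.erase w).erase v := by rw [hf, Finset.erase_right_comm]
        have hins_v : insert v f = W.erase w := by
          rw [hcomm]
          exact Finset.insert_erase (Finset.mem_erase.2 ⟨hvw, hv⟩)
        have hins_w : insert w f = W.erase v := by
          rw [hf]
          exact Finset.insert_erase hwv
        have hTsub : T ⊆ {W.erase v, W.erase w} := by
          rintro G ⟨⟨hGΩ, hGc⟩, hfG⟩
          have hGW' : G ⊆ W := hGW ⟨hGΩ, hGc⟩
          have hc1 : (G \ f).card = 1 := by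
            rw [Finset.card_sdiff_of_subset hfG, hGc, hfc]; omega
          obtain ⟨x, hx⟩ := Finset.card_eq_one.1 hc1
          have hxm : x ∈ G \ f := hx ▸ Finset.mem_singleton_self x
          rw [Finset.mem_sdiff] at hxm
          have hGeq : G = insert x f := by
            apply (Finset.eq_of_subset_of_card_le (Finset.insert_subset hxm.1 hfG) ?_).symm
            rw [Finset.card_insert_of_notMem hxm.2, hGc, hfc]
          have hxW : x ∈ W := hGW' hxm.1
          -- x ∈ W \ f = {v, w}
          have hWf : W \ f = {v, w} := by
            apply Finset.eq_of_subset_of_card_le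
            · intro y hy
              rw [Finset.mem_sdiff] at hy
              by_contra hy'
              simp only [Finset.mem_insert, Finset.mem_singleton] at hy'
              push_neg at hy'
              exact hy.2 (by
                rw [hf]
                exact Finset.mem_erase.2 ⟨hy'.2, Finset.mem_erase.2 ⟨hy'.1, hy.1⟩⟩)
            · have h2 : ({v, w} : Finset V).card ≤ 2 :=
                (Finset.card_insert_le _ _).trans (by simp)
              rw [Finset.card_sdiff_of_subset hfW, hWc, hfc]
              omega
          have : x ∈ ({v, w} : Finset V) := hWf ▸ Finset.mem_sdiff.2 ⟨hxW, hxm.2⟩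
          rcases Finset.mem_insert.1 this with rfl | h
          · exact Or.inr (show G = W.erase w by rw [hGeq, hins_v])
          · rw [Finset.mem_singleton] at h; subst h
            exact Or.inl (show G = W.erase v by rw [hGeq, hins_w])
        have hvT : W.erase v ∈ T := ⟨hev, by rw [← hins_w]; exact Finset.subset_insert _ _⟩
        by_contra hwT'
        have hwT : W.erase w ∉ T := fun h => hwT' h.1
        have hTeq : T = {W.erase v} := by
          apply Set.eq_singleton_iff_unique_mem.2 ⟨hvT, ?_⟩
          intro G hGT
          rcases hTsub hGT with h | h
          · exact h
          · exact absurd (h ▸ hGT) hwT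
        rw [hTeq, Set.ncard_singleton] at hEv
        exact (Nat.not_even_iff.2 rfl) hEv
    -- conclude
    obtain ⟨x₀, hx₀W, hG₀e, _⟩ := dface_sbdry_eq_erase (F := W) hWc hG₀W hG₀.2
    obtain ⟨y, hyW, hSe, _⟩ := dface_sbdry_eq_erase (F := W) hWc hSW hSc
    have : W.erase y ∈ dfaces Ω d := key x₀ hx₀W y hyW (hG₀e ▸ hG₀)
    rw [hSe]
    exact this.1

lemma ubd_apply_s7 {d : ℕ} (b : Finset V →₀ ZMod 2) (hbc2 : ∀ F ∈ b.support, F.card = d + 2)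
    {G : Finset V} (hG : G.card = d + 1) :
    ubd b G = (((b.support.filter (fun F => G ⊆ F)).card : ℕ) : ZMod 2) := by
  classical
  rw [ubd, Finsupp.sum_apply, Finsupp.sum]
  have step : ∀ F ∈ b.support,
      ((F.sum fun v => Finsupp.single (F.erase v) (b F)) G) =
        if G ⊆ F then b F else 0 := by
    intro F hF
    rw [Finset.sum_apply']
    by_cases hGF : G ⊆ F
    · obtain ⟨x, hxF, hGe, hxG⟩ := dface_sbdry_eq_erase (hbc2 F hF) hGF hG
      rw [Finset.sum_eq_single_of_mem x hxF, Finsupp.single_apply, if_pos hGe.symm,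
        if_pos hGF]
      intro v hv hvx
      rw [Finsupp.single_apply, if_neg]
      intro h
      apply hvx
      have hv' : v ∉ F.erase v := Finset.notMem_erase v F
      rw [h, hGe] at hv'
      by_contra hne
      exact hv' (Finset.mem_erase.2 ⟨hne, hv⟩)
    · rw [if_neg hGF]
      apply Finset.sum_eq_zero
      intro v hv
      rw [Finsupp.single_apply, if_neg]
      intro h
      exact hGF (h ▸ Finset.erase_subset v F)
  rw [Finset.sum_congr rfl step, ← Finset.sum_filter,
    Finset.sum_congr rfl
      (fun F hF => zmod2_eq_one (Finsupp.mem_support_iff.1 (Finset.mem_filter.1 hF).1)),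
    Finset.sum_const, nsmul_eq_mul, mul_one]

lemma ncard_setOf_fin {k : ℕ} (P : Fin k → Prop) [DecidablePred P] :
    {i | P i}.ncard = (Finset.univ.filter P).card := by
  rw [Set.ncard_eq_toFinset_card']
  congr 1
  ext i
  simp


/-- Lemma 5.4: a face-minimal, non-`d`-complete `d`-dimensional cycle
`Ω` in `Γ` whose sum of `d`-faces is, over `ℤ/2ℤ`, the boundary of a `(d+1)`-chain of
`(d+1)`-faces of `Γ_{V(Ω)}`, has a chord set in `Γ`. -/
theorem boundary_cycle_has_chordSet {V : Type*} [DecidableEq V] [Fintype V]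
    (Γ : Set (Finset V)) (d : ℕ) (hcomplex : IsComplex Γ)
    (Ω : Set (Finset V)) (hΩ : CycleIn Γ Ω d)
    (hfm : FaceMinimal Ω d) (hnc : ¬ DComplete Ω d)
    (c : Finset V →₀ ZMod 2) (hc : ↑c.support = dfaces Ω d)
    (b : Finset V →₀ ZMod 2) (hb : ChainOn (induced Γ (verts Ω)) (d + 1) b)
    (hbc : ubd b = c) :
    ∃ C, ChordSet Γ Ω d C := by
  classical
  obtain ⟨hΩΓ, hcyc⟩ := hΩ
  obtain ⟨hcx, hpure, hnonempty, hpc, heven⟩ := hcyc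
  have hcyc' : IsCycle Ω d := ⟨hcx, hpure, hnonempty, hpc, heven⟩
  have hbcard : ∀ F ∈ b.support, F.card = d + 2 := fun F hF => (hb F hF).2
  have hbind : ∀ F ∈ b.support, F ∈ induced Γ (verts Ω) := fun F hF => (hb F hF).1
  have hcmem : ∀ {G : Finset V}, G ∈ dfaces Ω d ↔ c G ≠ 0 := by
    intro G
    rw [← Finsupp.mem_support_iff, ← Finset.mem_coe, hc]
  -- the number of faces of `b` containing a given `d`-face
  set N : Finset V → ℕ := fun G => (b.support.filter (fun F => G ⊆ F)).card with hNdef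
  have hNval : ∀ {G : Finset V}, G.card = d + 1 → ((N G : ℕ) : ZMod 2) = c G := by
    intro G hGc
    rw [← hbc, ubd_apply_s7 b hbcard hGc]
  have hNodd : ∀ {G : Finset V}, G ∈ dfaces Ω d → Odd (N G) := by
    intro G hG
    rw [← Nat.not_even_iff_odd, even_iff_two_dvd]
    intro h2
    have h0 : ((N G : ℕ) : ZMod 2) = 0 := (ZMod.natCast_eq_zero_iff _ 2).2 h2
    rw [hNval hG.2] at h0
    exact hcmem.1 hG h0
  have hNeven : ∀ {G : Finset V}, G.card = d + 1 → G ∉ dfaces Ω d → Even (N G) := by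
    intro G hGc hG
    rw [even_iff_two_dvd, ← ZMod.natCast_eq_zero_iff _ 2, hNval hGc]
    by_contra h0
    exact hG (hcmem.2 h0)
  -- Ω has at least d+3 vertices
  have hbig : d + 3 ≤ (verts Ω).ncard := by
    by_contra h
    exact hnc (small_cycle_complete hcyc' (by omega))
  -- at least two faces in the chain b
  obtain ⟨G₀, hG₀⟩ := hnonempty
  have hfilter_ne : ∀ {G : Finset V}, G ∈ dfaces Ω d →
      (b.support.filter (fun F => G ⊆ F)).Nonempty := by
    intro G hG
    rw [← Finset.card_pos]
    obtain ⟨m, hm⟩ := hNodd hG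
    show 0 < N G
    omega
  have hk1 : 1 ≤ b.support.card := by
    obtain ⟨F, hF⟩ := hfilter_ne hG₀
    exact Finset.card_pos.2 ⟨F, (Finset.mem_filter.1 hF).1⟩
  have hk2 : 2 ≤ b.support.card := by
    by_contra h
    have hk : b.support.card = 1 := by omega
    obtain ⟨F₀, hF₀⟩ := Finset.card_eq_one.1 hk
    have hsub : ∀ G ∈ dfaces Ω d, G ⊆ F₀ := by
      intro G hG
      obtain ⟨F, hF⟩ := hfilter_ne hG
      rw [Finset.mem_filter, hF₀, Finset.mem_singleton] at hF
      exact hF.1 ▸ hF.2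
    have hverts : verts Ω ⊆ ↑F₀ := by
      rintro v ⟨F, hF, hv⟩
      obtain ⟨G, hG, hFG⟩ := hpure F hF
      exact hsub G hG (hFG hv)
    have hle : (verts Ω).ncard ≤ d + 2 := by
      have h1 : (verts Ω).ncard ≤ (↑F₀ : Set V).ncard :=
        Set.ncard_le_ncard hverts (F₀ : Finset V).finite_toSet
      have h2 : (↑F₀ : Set V).ncard = F₀.card := Set.ncard_coe_finset F₀
      have h3 : F₀.card = d + 2 := hbcard F₀ (by rw [hF₀]; exact Finset.mem_singleton_self _)
      omega
    omega
  -- the family of boundaries of the (d+1)-simplices of b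
  set k := b.support.card with hkdef
  let e : {x // x ∈ b.support} ≃ Fin k := b.support.equivFin
  set Ωi : Fin k → Set (Finset V) := fun i => sbdry (↑(e.symm i) : Finset V) d with hΩidef
  have hcard_i : ∀ i : Fin k, (↑(e.symm i) : Finset V).card = d + 2 :=
    fun i => hbcard _ (e.symm i).2
  have hmem_i : ∀ (G : Finset V) (i : Fin k),
      G ∈ dfaces (Ωi i) d ↔ G ⊆ ↑(e.symm i) ∧ G.card = d + 1 := by
    intro G i
    rw [hΩidef]
    simp only
    rw [dfaces_sbdry]
    rfl
  -- counting lemma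
  have hcnt : ∀ {G : Finset V}, G.card = d + 1 →
      {i | G ∈ dfaces (Ωi i) d}.ncard = N G := by
    intro G hGc
    have hset : {i | G ∈ dfaces (Ωi i) d} = {i : Fin k | G ⊆ ↑(e.symm i)} := by
      ext i
      simp only [Set.mem_setOf_eq, hmem_i G i, hGc, and_true]
    rw [hset, ncard_setOf_fin]
    refine Finset.card_bij (fun i _ => (↑(e.symm i) : Finset V)) ?_ ?_ ?_
    · intro i hi
      rw [Finset.mem_filter] at hi
      exact Finset.mem_filter.2 ⟨(e.symm i).2, hi.2⟩
    · intro i₁ _ i₂ _ h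
      have := Subtype.coe_injective (a₁ := e.symm i₁) (a₂ := e.symm i₂) h
      exact e.symm.injective this
    · intro F hF
      rw [Finset.mem_filter] at hF
      refine ⟨e ⟨F, hF.1⟩, ?_, ?_⟩
      · rw [Finset.mem_filter]
        refine ⟨Finset.mem_univ _, ?_⟩
        rw [Equiv.symm_apply_apply]
        exact hF.2
      · exact congrArg Subtype.val (e.symm_apply_apply ⟨F, hF.1⟩)
  -- the chord set
  set C : Set (Finset V) :=
    {G | (∃ F ∈ b.support, G ⊆ F ∧ G.card = d + 1) ∧ G ∉ Ω} with hCdef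
  have hCcard : ∀ G ∈ C, G.card = d + 1 := by
    rintro G ⟨⟨F, _, _, hGc⟩, _⟩
    exact hGc
  have hCnotface : ∀ G ∈ C, G ∉ dfaces Ω d := fun G hG h => hG.2 h.1
  refine ⟨C, ?_, fun F hF => hF.2, ?_, k, Ωi, hk2, ?_, ?_, ?_, ?_, ?_⟩
  · -- C ⊆ dfaces Γ d
    rintro G ⟨⟨F, hF, hGF, hGc⟩, _⟩
    exact ⟨hcomplex F (hbind F hF).1 G hGF, hGc⟩
  · -- vertices in verts Ω
    rintro G ⟨⟨F, hF, hGF, _⟩, _⟩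
    exact fun v hv => (hbind F hF).2 (hGF hv)
  · -- each Ωi is a cycle
    intro i
    exact isCycle_sbdry (hcard_i i)
  · -- the union of the d-faces
    ext G
    rw [Set.mem_iUnion]
    constructor
    · rintro ⟨i, hi⟩
      rw [hmem_i] at hi
      by_cases hGΩ : G ∈ Ω
      · exact Or.inl ⟨hGΩ, hi.2⟩
      · exact Or.inr ⟨⟨↑(e.symm i), (e.symm i).2, hi.1, hi.2⟩, hGΩ⟩
    · rintro (hG | hG)
      · obtain ⟨F, hF⟩ := hfilter_ne hG
        rw [Finset.mem_filter] at hF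
        refine ⟨e ⟨F, hF.1⟩, ?_⟩
        rw [hmem_i, Equiv.symm_apply_apply]
        exact ⟨hF.2, hG.2⟩
      · obtain ⟨⟨F, hF, hGF, hGc⟩, _⟩ := hG
        refine ⟨e ⟨F, hF⟩, ?_⟩
        rw [hmem_i, Equiv.symm_apply_apply]
        exact ⟨hGF, hGc⟩
  · -- faces of C lie in an even number of the Ωi
    intro F hF
    rw [hcnt (hCcard F hF)]
    exact hNeven (hCcard F hF) (hCnotface F hF)
  · -- faces of Ω lie in an odd number of the Ωi
    intro F hF
    rw [hcnt hF.2]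
    exact hNodd hF
  · -- each Ωi has fewer vertices
    intro i
    rw [hΩidef]
    simp only
    rw [verts_sbdry, Set.ncard_coe_finset, hcard_i i]
    omega

end ChordedPaper
end
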